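/- Let Y be a Minkowski-reduced 3×3 positive definite symmetric real matrix. Then for all n ∈ ℝ³ we have nᵀYn ≥ (1/100)·Y_{11}·nᵀn. -/

import Mathlib

open Matrix

/-- The quadratic form `vᵀ Y v` attached to a real 3×3 matrix. -/
def quadForm (Y : Matrix (Fin 3) (Fin 3) ℝ) (v : Fin 3 → ℝ) : ℝ :=
  ∑ i, ∑ j, v i * Y i j * v j

/-- A real symmetric positive definite 3×3 matrix is Minkowski-reduced if
(a) for all `j` and all integer vectors `v` with `gcd (v j, …, v 2) = 1`
we have `vᵀ Y v ≥ Y j j`, and (b) `Y 0 1 ≥ 0` and `Y 1 2 ≥ 0`. -/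
def MinkowskiReduced (Y : Matrix (Fin 3) (Fin 3) ℝ) : Prop :=
  Y.IsSymm ∧ Y.PosDef ∧
  (∀ j : Fin 3, ∀ v : Fin 3 → ℤ,
      Finset.gcd (Finset.univ.filter fun i => j ≤ i) v = 1 →
      quadForm Y (fun i => (v i : ℝ)) ≥ Y j j) ∧
  0 ≤ Y 0 1 ∧ 0 ≤ Y 1 2

/-!
Condition (a) is invariant under conjugating `Y` by a diagonal sign matrix, which fixes the
diagonal, so it suffices to bound `nᵀ Y n` for `n` with nonnegative entries. There only the
instances of (a) for `e₂, e₃, e₁ + e₂, e₁ + e₃, e₂ + e₃, e₁ + e₂ + e₃` are needed.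
Splitting each product `nᵢ nⱼ` as `m + (nᵢ nⱼ - m)`, with `m` the smallest of the three
products, they give `nᵀ Y n ≥ Y₁₁ (|n|² - nᵢ nⱼ - nᵢ nₖ)` for suitable `i, j, k`, and
`|n|² - nᵢ nⱼ - nᵢ nₖ ≥ |n|² / 4`.
-/

theorem Finset.gcd_mul_left_of_isUnit {ι α : Type*} [CommMonoidWithZero α]
    [NormalizedGCDMonoid α] (s : Finset ι) (f σ : ι → α) (hσ : ∀ i, IsUnit (σ i)) :
    s.gcd (fun i => σ i * f i) = s.gcd f := by
  rw [← normalize_gcd, ← normalize_gcd (f := f)]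
  exact normalize_eq_normalize
    (gcd_mono_fun fun i _ => (hσ i).mul_left_dvd.2 dvd_rfl)
    (gcd_mono_fun fun i _ => Dvd.intro_left _ rfl)

theorem mul_add_mul_le_three_quarters_sum_sq (x y z : ℝ) :
    x * y + x * z ≤ 3 / 4 * (x ^ 2 + y ^ 2 + z ^ 2) := by
  nlinarith [sq_nonneg (3 * y - 2 * x), sq_nonneg (3 * z - 2 * x)]

theorem quarter_mul_sum_sq_le_of_nonneg {a b c p q r u v w : ℝ}
    (hu : 0 ≤ u) (hv : 0 ≤ v) (hw : 0 ≤ w) (ha : 0 ≤ a) (hab : a ≤ b) (hbc : b ≤ c)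
    (hp : 0 ≤ a + 2 * p) (hq : 0 ≤ a + 2 * q) (hr : 0 ≤ b + 2 * r)
    (hpqr : 0 ≤ a + b + 2 * p + 2 * q + 2 * r) :
    a / 4 * (u ^ 2 + v ^ 2 + w ^ 2) ≤
      a * u ^ 2 + b * v ^ 2 + c * w ^ 2 + 2 * p * u * v + 2 * q * u * w + 2 * r * v * w := by
  have bound : ∀ m, 0 ≤ m → m ≤ u * v → m ≤ u * w → m ≤ v * w →
      a * (u ^ 2 + v ^ 2 + w ^ 2 - u * v - u * w - v * w + m) ≤
        a * u ^ 2 + b * v ^ 2 + c * w ^ 2 + 2 * p * u * v + 2 * q * u * w + 2 * r * v * w :=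
    fun m hm huv huw hvw => by
      linarith [mul_nonneg hp (sub_nonneg.2 huv), mul_nonneg hq (sub_nonneg.2 huw),
        mul_nonneg hr (sub_nonneg.2 hvw), mul_nonneg hpqr hm,
        mul_nonneg (sub_nonneg.2 hab)
          (by nlinarith [sq_nonneg (v - w)] : 0 ≤ v ^ 2 + w ^ 2 - v * w),
        mul_nonneg (sub_nonneg.2 hbc) (sq_nonneg w)]
  have huv := mul_nonneg hu hv
  have huw := mul_nonneg hu hw
  have hvw := mul_nonneg hv hw
  rcases le_total (u * v) (u * w) with h₁ | h₁
  · rcases le_total (u * v) (v * w) with h₂ | h₂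
    · linarith [bound _ huv le_rfl h₁ h₂,
        mul_le_mul_of_nonneg_left (mul_add_mul_le_three_quarters_sum_sq w u v) ha]
    · linarith [bound _ hvw h₂ (h₂.trans h₁) le_rfl,
        mul_le_mul_of_nonneg_left (mul_add_mul_le_three_quarters_sum_sq u v w) ha]
  · rcases le_total (u * w) (v * w) with h₂ | h₂
    · linarith [bound _ huw h₁ le_rfl h₂,
        mul_le_mul_of_nonneg_left (mul_add_mul_le_three_quarters_sum_sq v u w) ha]
    · linarith [bound _ hvw (h₂.trans h₁) h₂ le_rfl,
        mul_le_mul_of_nonneg_left (mul_add_mul_le_three_quarters_sum_sq u v w) ha]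

def MinkowskiInequalities (Y : Matrix (Fin 3) (Fin 3) ℝ) : Prop :=
  ∀ j : Fin 3, ∀ v : Fin 3 → ℤ,
    Finset.gcd (Finset.univ.filter fun i => j ≤ i) v = 1 →
      Y j j ≤ quadForm Y (fun i => (v i : ℝ))

def signConj (σ : Fin 3 → ℤ) (Y : Matrix (Fin 3) (Fin 3) ℝ) : Matrix (Fin 3) (Fin 3) ℝ :=
  Matrix.of fun i j => σ i * Y i j * σ j

section

variable {Y : Matrix (Fin 3) (Fin 3) ℝ} {σ : Fin 3 → ℤ}

theorem quadForm_signConj (v : Fin 3 → ℝ) :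
    quadForm (signConj σ Y) v = quadForm Y (fun i => σ i * v i) := by
  simp only [quadForm, signConj, Matrix.of_apply]
  exact Finset.sum_congr rfl fun i _ => Finset.sum_congr rfl fun j _ => by ring

theorem signConj_apply_self (hσ : ∀ i, IsUnit (σ i)) (i : Fin 3) : signConj σ Y i i = Y i i := by
  have h : ((σ i * σ i : ℤ) : ℝ) = 1 := by rw [Int.isUnit_mul_self (hσ i), Int.cast_one]
  push_cast at h
  simp only [signConj, Matrix.of_apply]
  linear_combination Y i i * h

theorem Matrix.IsSymm.signConj (hY : Y.IsSymm) : (signConj σ Y).IsSymm :=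
  Matrix.IsSymm.ext fun i j => by simp only [_root_.signConj, Matrix.of_apply, hY.apply]; ring

theorem MinkowskiInequalities.signConj (hY : MinkowskiInequalities Y) (hσ : ∀ i, IsUnit (σ i)) :
    MinkowskiInequalities (signConj σ Y) := by
  intro j v hv
  rw [quadForm_signConj, signConj_apply_self hσ]
  have := hY j (fun i => σ i * v i) (by rwa [Finset.gcd_mul_left_of_isUnit _ _ _ hσ])
  simpa only [Int.cast_mul, mul_assoc] using this

theorem quadForm_eq (hY : Y.IsSymm) (v : Fin 3 → ℝ) :
    quadForm Y v = Y 0 0 * v 0 ^ 2 + Y 1 1 * v 1 ^ 2 + Y 2 2 * v 2 ^ 2 + 2 * Y 0 1 * v 0 * v 1 +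
      2 * Y 0 2 * v 0 * v 2 + 2 * Y 1 2 * v 1 * v 2 := by
  simp only [quadForm, Fin.sum_univ_three, ← hY.apply 0 1, ← hY.apply 0 2, ← hY.apply 1 2]
  ring

theorem MinkowskiInequalities.quarter_mul_le_quadForm_of_nonneg (hY : MinkowskiInequalities Y)
    (hs : Y.IsSymm) (h₀ : 0 ≤ Y 0 0) {u : Fin 3 → ℝ} (hu : ∀ i, 0 ≤ u i) :
    Y 0 0 / 4 * ∑ i, u i ^ 2 ≤ quadForm Y u := by
  have h := fun j (v : Fin 3 → ℤ) hv => (hY j v hv).trans_eq (quadForm_eq hs _)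
  have h₁ := h 0 ![0, 1, 0] (by decide)
  have h₂ := h 1 ![0, 0, 1] (by decide)
  have h₃ := h 1 ![1, 1, 0] (by decide)
  have h₄ := h 2 ![1, 0, 1] (by decide)
  have h₅ := h 2 ![0, 1, 1] (by decide)
  have h₆ := h 2 ![1, 1, 1] (by decide)
  norm_num [Matrix.cons_val_two, Matrix.vecHead, Matrix.vecTail] at h₁ h₂ h₃ h₄ h₅ h₆
  rw [quadForm_eq hs, Fin.sum_univ_three]
  exact quarter_mul_sum_sq_le_of_nonneg (hu 0) (hu 1) (hu 2) h₀ h₁ h₂ (by linarith)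
    (by linarith) (by linarith) (by linarith)

theorem MinkowskiInequalities.quarter_mul_le_quadForm (hY : MinkowskiInequalities Y)
    (hs : Y.IsSymm) (h₀ : 0 ≤ Y 0 0) (n : Fin 3 → ℝ) :
    Y 0 0 / 4 * ∑ i, n i ^ 2 ≤ quadForm Y n := by
  set σ : Fin 3 → ℤ := fun i => if 0 ≤ n i then 1 else -1
  have hσ : ∀ i, IsUnit (σ i) := fun i => by by_cases h : 0 ≤ n i <;> simp [σ, h]
  have hn : (fun i => (σ i : ℝ) * |n i|) = n := funext fun i => by
    by_cases h : 0 ≤ n i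
    · simp [σ, h, abs_of_nonneg h]
    · simp [σ, h, abs_of_neg (not_le.1 h)]
  have := (hY.signConj hσ).quarter_mul_le_quadForm_of_nonneg hs.signConj
    (by rwa [signConj_apply_self hσ]) (u := fun i => |n i|) fun i => abs_nonneg _
  rw [signConj_apply_self hσ, quadForm_signConj, hn] at this
  simpa only [sq_abs] using this

end

theorem stmt_1 (Y : Matrix (Fin 3) (Fin 3) ℝ) (hY : MinkowskiReduced Y) :
    ∀ n : Fin 3 → ℝ, quadForm Y n ≥ (1 / 100) * Y 0 0 * ∑ i, n i ^ 2 := by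
  intro n
  obtain ⟨hs, hpd, hmin, -, -⟩ := hY
  have h₀ : 0 ≤ Y 0 0 := hpd.diag_pos.le
  have hquarter := MinkowskiInequalities.quarter_mul_le_quadForm hmin hs h₀ n
  have hnorm : 0 ≤ Y 0 0 * ∑ i, n i ^ 2 := by positivity
  linarith
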